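/- Let Y be a strict ideal in a Banach space X, meaning B_{X*} is the w*-closure of B_{Y*} under the embedding given by a norm-one projection P on X* with ker P = Y^⊥. If x₀* is a semi w*-PC point of B_{Y*}, then x₀* is a semi w*-PC point of B_{X*}. -/
import Mathlib


/-- The weak-star topology on the dual of a normed space `Z`: the topology induced by the
evaluations at points of `Z`. -/
noncomputable def wstarTop (Z : Type*) [NormedAddCommGroup Z] [NormedSpace ℝ Z] :
    TopologicalSpace (Z →L[ℝ] ℝ) :=
  TopologicalSpace.induced (fun (f : Z →L[ℝ] ℝ) (z : Z) => f z) inferInstance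

/-- A point `x₀*` of `B_{Z*}` is a *semi w*-PC point* of `B_{Z*}` if for every `ε > 0` there is
a nonempty relatively w*-open subset of `B_{Z*}` contained in `B(x₀*, ε)`. -/
def IsSemiWstarPCPointOfDualBall {Z : Type*} [NormedAddCommGroup Z] [NormedSpace ℝ Z]
    (x₀ : Z →L[ℝ] ℝ) : Prop :=
  ‖x₀‖ ≤ 1 ∧ ∀ ε > (0 : ℝ), ∃ U : Set (Z →L[ℝ] ℝ), (wstarTop Z).IsOpen U ∧
    (U ∩ {g : Z →L[ℝ] ℝ | ‖g‖ ≤ 1}).Nonempty ∧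
    U ∩ {g : Z →L[ℝ] ℝ | ‖g‖ ≤ 1} ⊆ Metric.closedBall x₀ ε

lemma wstar_eval_continuous {Z : Type*} [NormedAddCommGroup Z] [NormedSpace ℝ Z] (z : Z) :
    @Continuous _ _ (wstarTop Z) _ (fun f : Z →L[ℝ] ℝ => f z) := by
  letI := wstarTop Z
  exact (continuous_apply z).comp continuous_induced_dom

lemma wstar_closedBall_closed {Z : Type*} [NormedAddCommGroup Z] [NormedSpace ℝ Z]
    (x₀ : Z →L[ℝ] ℝ) {ε : ℝ} (hε : 0 ≤ ε) :
    @IsClosed _ (wstarTop Z) (Metric.closedBall x₀ ε) := by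
  letI := wstarTop Z
  have : Metric.closedBall x₀ ε =
      ⋂ z : Z, (fun f : Z →L[ℝ] ℝ => f z - x₀ z) ⁻¹' {t : ℝ | |t| ≤ ε * ‖z‖} := by
    ext f
    simp only [Metric.mem_closedBall, dist_eq_norm, Set.mem_iInter, Set.mem_preimage,
      Set.mem_setOf_eq]
    constructor
    · intro hf z
      calc |f z - x₀ z| = ‖(f - x₀) z‖ := by simp [ContinuousLinearMap.sub_apply]
        _ ≤ ‖f - x₀‖ * ‖z‖ := (f - x₀).le_opNorm z
        _ ≤ ε * ‖z‖ := by gcongr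
    · intro hf
      refine (f - x₀).opNorm_le_bound hε (fun z => ?_)
      simpa [ContinuousLinearMap.sub_apply, Real.norm_eq_abs] using hf z
  rw [this]
  exact isClosed_iInter fun z =>
    (isClosed_le continuous_abs continuous_const).preimage
      ((wstar_eval_continuous z).sub continuous_const)

lemma norm_eq_norm_restrict {X : Type*} [NormedAddCommGroup X] [NormedSpace ℝ X]
    (Y : Submodule ℝ X) (P : (X →L[ℝ] ℝ) →L[ℝ] (X →L[ℝ] ℝ))
    (hPnorm : ‖P‖ = 1)
    (hker : ∀ f : X →L[ℝ] ℝ, P f = 0 ↔ ∀ y ∈ Y, f y = 0)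
    (f : X →L[ℝ] ℝ) (hf : P f = f) :
    ‖f‖ = ‖f.comp Y.subtypeL‖ := by
  refine le_antisymm ?_ ?_
  · obtain ⟨G, hG, hGn⟩ := exists_extension_norm_eq Y (f.comp Y.subtypeL)
    have hfg : P (f - G) = 0 := by
      rw [hker]
      intro y hy
      have := hG ⟨y, hy⟩
      simp only [ContinuousLinearMap.comp_apply, Submodule.subtypeL_apply,
        Submodule.coe_subtype] at this
      simp [ContinuousLinearMap.sub_apply, this]
    have : f = P G := by
      have h2 := map_sub P f G
      rw [hfg, hf] at h2
      exact sub_eq_zero.mp h2.symm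
    calc ‖f‖ = ‖P G‖ := by rw [← this]
      _ ≤ ‖P‖ * ‖G‖ := P.le_opNorm G
      _ = ‖f.comp Y.subtypeL‖ := by rw [hPnorm, hGn, one_mul]
  · refine (f.comp Y.subtypeL).opNorm_le_bound (norm_nonneg f) (fun y => ?_)
    calc ‖f y‖ ≤ ‖f‖ * ‖(y : X)‖ := f.le_opNorm y
      _ = ‖f‖ * ‖y‖ := by rw [Submodule.norm_coe]

/-- Let `Y` be a strict ideal in a Banach space `X`, witnessed by a norm-one projection `P` on
`X*` with `ker P = Y^⊥` such that `B_{P(X*)}` is w*-dense in `B_{X*}`. If `x₀* ∈ P(X*)` has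
restriction to `Y` a semi w*-PC point of `B_{Y*}`, then `x₀*` is a semi w*-PC point of
`B_{X*}`. -/
theorem semiWstarPC_of_strictIdeal
    {X : Type*} [NormedAddCommGroup X] [NormedSpace ℝ X] [CompleteSpace X]
    (Y : Submodule ℝ X) (hYc : IsClosed (Y : Set X))
    (P : (X →L[ℝ] ℝ) →L[ℝ] (X →L[ℝ] ℝ))
    (hproj : ∀ f, P (P f) = P f) (hPnorm : ‖P‖ = 1)
    (hker : ∀ f : X →L[ℝ] ℝ, P f = 0 ↔ ∀ y ∈ Y, f y = 0)
    (hdense : @closure _ (wstarTop X) {f : X →L[ℝ] ℝ | P f = f ∧ ‖f‖ ≤ 1}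
      = {f : X →L[ℝ] ℝ | ‖f‖ ≤ 1})
    (x₀ : X →L[ℝ] ℝ) (hx₀ : P x₀ = x₀)
    (h : IsSemiWstarPCPointOfDualBall (x₀.comp Y.subtypeL)) :
    IsSemiWstarPCPointOfDualBall x₀ := by
  obtain ⟨hx1, hPC⟩ := h
  have hxnorm : ‖x₀‖ ≤ 1 := by
    rw [norm_eq_norm_restrict Y P hPnorm hker x₀ hx₀]; exact hx1
  refine ⟨hxnorm, fun ε hε => ?_⟩
  obtain ⟨U, hUopen, ⟨g, hgU, hg1⟩, hUsub⟩ := hPC ε hε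
  obtain ⟨S, hSopen, hSU⟩ := isOpen_induced_iff.mp hUopen
  have hgS : (fun y : Y => g y) ∈ S := by rw [← hSU] at hgU; exact hgU
  obtain ⟨I, u, hu, hpi⟩ := isOpen_pi_iff.mp hSopen _ hgS
  set W : Set (X →L[ℝ] ℝ) := ⋂ y ∈ I, (fun f : X →L[ℝ] ℝ => f (y : X)) ⁻¹' (u y) with hWdef
  have hWopen : (wstarTop X).IsOpen W := by
    letI := wstarTop X
    exact isOpen_biInter_finset fun y hy => (hu y hy).1.preimage (wstar_eval_continuous (y : X))
  have hres : ∀ f : X →L[ℝ] ℝ, f ∈ W → f.comp Y.subtypeL ∈ U := by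
    intro f hf
    rw [← hSU]
    apply hpi
    intro y hy
    exact Set.mem_iInter₂.mp hf y hy
  obtain ⟨G, hG, hGn⟩ := exists_extension_norm_eq Y g
  have hGW : G ∈ W := by
    apply Set.mem_iInter₂.mpr
    intro y hy
    have := hG y
    simp only [Set.mem_preimage]
    rw [this]
    exact (hu y hy).2
  refine ⟨W, hWopen, ⟨G, hGW, by rw [Set.mem_setOf_eq, hGn]; exact hg1⟩, ?_⟩
  letI := wstarTop X
  have hD : W ∩ {f : X →L[ℝ] ℝ | P f = f ∧ ‖f‖ ≤ 1} ⊆ Metric.closedBall x₀ ε := by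
    rintro h' ⟨hW', hPh', hh1⟩
    have hres' : h'.comp Y.subtypeL ∈ U := hres h' hW'
    have hnle : ‖h'.comp Y.subtypeL‖ ≤ 1 := by
      rw [← norm_eq_norm_restrict Y P hPnorm hker h' hPh']; exact hh1
    have hd := hUsub ⟨hres', hnle⟩
    rw [Metric.mem_closedBall, dist_eq_norm] at hd ⊢
    have hP : P (h' - x₀) = h' - x₀ := by rw [map_sub, hPh', hx₀]
    rw [norm_eq_norm_restrict Y P hPnorm hker _ hP, ContinuousLinearMap.sub_comp]
    exact hd
  rintro f ⟨hfW, hf1⟩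
  have hf_cl : f ∈ closure (W ∩ {f : X →L[ℝ] ℝ | P f = f ∧ ‖f‖ ≤ 1}) := by
    have hfD : f ∈ closure {f : X →L[ℝ] ℝ | P f = f ∧ ‖f‖ ≤ 1} := by
      rw [hdense]; exact hf1
    rw [mem_closure_iff] at hfD ⊢
    intro O hO hfO
    obtain ⟨p, hp1, hp2⟩ := hfD (O ∩ W) (hO.inter hWopen) ⟨hfO, hfW⟩
    exact ⟨p, hp1.1, hp1.2, hp2⟩
  exact ((wstar_closedBall_closed x₀ hε.le).closure_subset_iff.mpr hD) hf_cl
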